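/- arXiv:math/0605605 — 3 statements merged into one kernel-verified Lean document; each statement's English description precedes it below -/
import Mathlib

section
/- Let m be a positive integer, and let V be an open convex subset of ℂ^m such that V ∩ ℝ^m is nonempty. Let h : V → ℝ be a twice continuously differentiable function satisfying: (i) h is pluriharmonic on V, i.e. ∂²h/∂z_j∂z̄_k = 0 on V for all j,k ∈ {1,…,m}; (ii) h(x) = 0 for every x ∈ V ∩ ℝ^m; (iii) h(z̄₁,…,z̄_m) = h(z₁,…,z_m) whenever both (z₁,…,z_m) and its componentwise complex conjugate (z̄₁,…,z̄_m) lie in V. Then h is identically zero on V. -/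
/-!
The functions `∂h/∂x_k - i ∂h/∂y_k` are holomorphic on `V`: pluriharmonicity is exactly
the Cauchy–Riemann system for them. At a real point `q`, `∂h/∂x_k` vanishes because `h` vanishes on
`V ∩ ℝ^m`, and `∂h/∂y_k` vanishes because the reflection symmetry makes `t ↦ h (q + t i e_k)` even.
A holomorphic function vanishing on the totally real part of a convex domain vanishes identically:
on a complex line `x + ℂ y` with `x, y` real it vanishes on the real axis, and the one-variable
identity theorem applies. So all first partial derivatives of `h` vanish, `h` is constant on the
connected set `V`, and it vanishes at a real point.
-/

open Complex ComplexConjugate Filter Set Topology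

section LineDeriv

variable {𝕜 E F : Type*} [NontriviallyNormedField 𝕜] [NormedAddCommGroup E] [NormedSpace 𝕜 E]
  [NormedAddCommGroup F] [NormedSpace 𝕜 F] {f : E → F} {x v : E}

lemma tendsto_add_smul_nhds_zero (x v : E) : Tendsto (fun t : 𝕜 => x + t • v) (𝓝 0) (𝓝 x) :=
  (by fun_prop : Continuous fun t : 𝕜 => x + t • v).tendsto' 0 x (by simp)

lemma lineDeriv_eq_zero_of_eventually_eq_zero (hf : ∀ᶠ t in 𝓝 (0 : 𝕜), f (x + t • v) = 0) :
    lineDeriv 𝕜 f x v = 0 := by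
  have hf' : (fun t : 𝕜 => f (x + t • v)) =ᶠ[𝓝 0] fun _ => 0 := hf
  simp [lineDeriv, hf'.deriv_eq]

lemma lineDeriv_eq_zero_of_eventually_even [CharZero 𝕜]
    (hf : ∀ᶠ t in 𝓝 (0 : 𝕜), f (x + t • -v) = f (x + t • v)) : lineDeriv 𝕜 f x v = 0 := by
  have h : lineDeriv 𝕜 f x (-v) = lineDeriv 𝕜 f x v := Filter.EventuallyEq.deriv_eq hf
  rw [lineDeriv_neg, neg_eq_iff_add_eq_zero, ← two_smul 𝕜] at h
  exact (smul_eq_zero.1 h).resolve_left two_ne_zero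

end LineDeriv

section IdentityTheorem

variable {E F : Type*} [NormedAddCommGroup E] [NormedSpace ℂ E] [NormedAddCommGroup F]
  [NormedSpace ℂ F]

lemma Convex.preimage_add_smul {U : Set E} (hU : Convex ℝ U) (x v : E) :
    Convex ℝ {t : ℂ | x + t • v ∈ U} :=
  (hU.translate_preimage_right x).is_linear_preimage
    ⟨fun a b => add_smul a b v, fun c t => smul_assoc c t v⟩

lemma DifferentiableOn.analyticOnNhd_comp_add_smul [CompleteSpace F] {G : E → F} {U : Set E}
    (hG : DifferentiableOn ℂ G U) (hU : IsOpen U) (x v : E) :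
    AnalyticOnNhd ℂ (fun t : ℂ => G (x + t • v)) {t | x + t • v ∈ U} :=
  have hline : Differentiable ℂ fun t : ℂ => x + t • v :=
    (differentiable_const x).add (differentiable_id.smul_const v)
  (hG.comp hline.differentiableOn fun _ ht => ht).analyticOnNhd (hU.preimage hline.continuous)

theorem DifferentiableOn.eqOn_zero_of_eventuallyEq_zero [CompleteSpace F] {G : E → F}
    {U : Set E} (hG : DifferentiableOn ℂ G U) (hUo : IsOpen U) (hUc : Convex ℝ U) {p : E}
    (hp : p ∈ U) (hGp : G =ᶠ[𝓝 p] 0) : EqOn G 0 U := by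
  intro z hz
  have hline := (hG.analyticOnNhd_comp_add_smul hUo p (z - p))
    |>.eqOn_zero_of_preconnected_of_eventuallyEq_zero
      (hUc.preimage_add_smul p (z - p)).isPreconnected (z₀ := 0) (by simpa using hp)
      ((tendsto_add_smul_nhds_zero p (z - p)).eventually hGp) (show (1 : ℂ) ∈ _ by simpa using hz)
  simpa using hline

end IdentityTheorem

section CoordinateSpace

variable {ι F : Type*} [Fintype ι] [NormedAddCommGroup F] [NormedSpace ℂ F]

lemma dist_re_le_of_im_eq_zero {z p : ι → ℂ} (hp : ∀ j, (p j).im = 0) :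
    dist (fun j => ((z j).re : ℂ)) p ≤ dist z p := by
  refine (dist_pi_le_iff dist_nonneg).2 fun j => ?_
  calc dist ((z j).re : ℂ) (p j) = |(z j - p j).re| := by
        rw [dist_eq_norm, ← re_add_im (p j), hp j]
        simp [← ofReal_sub, Complex.norm_real]
    _ ≤ ‖z j - p j‖ := abs_re_le_norm _
    _ ≤ dist z p := (dist_eq_norm (z j) (p j)).symm.trans_le (dist_le_pi_dist z p j)

theorem DifferentiableOn.apply_eq_zero_of_forall_real [CompleteSpace F] {G : (ι → ℂ) → F}
    {U : Set (ι → ℂ)} (hG : DifferentiableOn ℂ G U) (hUo : IsOpen U) (hUc : Convex ℝ U)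
    (hG0 : ∀ z ∈ U, (∀ j, (z j).im = 0) → G z = 0) {x y : ι → ℂ} (hx : ∀ j, (x j).im = 0)
    (hy : ∀ j, (y j).im = 0) (hxU : x ∈ U) (hU : x + I • y ∈ U) : G (x + I • y) = 0 := by
  have hreal : ∀ᶠ s : ℝ in 𝓝[≠] 0, G (x + (s : ℂ) • y) = 0 := by
    have hmem : ∀ᶠ s : ℝ in 𝓝 0, x + (s : ℂ) • y ∈ U :=
      ((tendsto_add_smul_nhds_zero x y).comp (continuous_ofReal.tendsto' 0 0 ofReal_zero)).eventually
        (hUo.mem_nhds hxU)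
    refine eventually_nhdsWithin_of_eventually_nhds (hmem.mono fun s hs => hG0 _ hs fun j => ?_)
    simp [hx j, hy j]
  have hfreq : ∃ᶠ t in 𝓝[≠] (0 : ℂ), G (x + t • y) = 0 :=
    (continuous_ofReal.continuousWithinAt.tendsto_nhdsWithin fun _ _ => by simp_all).frequently
      hreal.frequently
  exact (hG.analyticOnNhd_comp_add_smul hUo x y).eqOn_zero_of_preconnected_of_frequently_eq_zero
    (hUc.preimage_add_smul x y).isPreconnected (z₀ := 0) (by simpa using hxU) hfreq hU

theorem DifferentiableOn.eqOn_zero_of_forall_real [CompleteSpace F] {G : (ι → ℂ) → F}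
    {U : Set (ι → ℂ)} (hG : DifferentiableOn ℂ G U) (hUo : IsOpen U) (hUc : Convex ℝ U)
    {p : ι → ℂ} (hp : p ∈ U) (hpre : ∀ j, (p j).im = 0)
    (hG0 : ∀ z ∈ U, (∀ j, (z j).im = 0) → G z = 0) : EqOn G 0 U := by
  obtain ⟨r, hr, hball⟩ := Metric.isOpen_iff.1 hUo p hp
  refine hG.eqOn_zero_of_eventuallyEq_zero hUo hUc hp ?_
  filter_upwards [Metric.ball_mem_nhds p hr] with z hz
  have hz_eq : z = (fun j => ((z j).re : ℂ)) + I • fun j => ((z j).im : ℂ) := by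
    ext j
    simp [mul_comm I, re_add_im]
  rw [hz_eq]
  exact (hG.mono hball).apply_eq_zero_of_forall_real Metric.isOpen_ball (convex_ball p r)
    (fun w hw => hG0 w (hball hw)) (by simp) (by simp)
    ((dist_re_le_of_im_eq_zero hpre).trans_lt hz) (hz_eq ▸ hz)

variable [DecidableEq ι]

lemma LinearMap.map_smul_complex_of_map_single_I {T : (ι → ℂ) →ₗ[ℝ] F}
    (hT : ∀ j, T (Pi.single j I) = I • T (Pi.single j 1)) (a : ℂ) (v : ι → ℂ) :
    T (a • v) = a • T v := by
  have hsingle : ∀ j c, T (Pi.single j (a • c)) = a • T (Pi.single j c) := fun j c =>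
    real_linearMap_map_smul_complex (ℓ := T ∘ₗ LinearMap.single ℝ (fun _ => ℂ) j) (hT j) a c
  rw [← Finset.univ_sum_single v, Finset.smul_sum, map_sum, map_sum, Finset.smul_sum]
  simp only [← Pi.single_smul', hsingle]

theorem HasFDerivAt.differentiableAt_complex_of_map_single_I {f : (ι → ℂ) → F}
    {f' : (ι → ℂ) →L[ℝ] F} {z : ι → ℂ} (hf : HasFDerivAt f f' z)
    (hI : ∀ j, f' (Pi.single j I) = I • f' (Pi.single j 1)) : DifferentiableAt ℂ f z :=
  ⟨⟨{ f'.toLinearMap with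
      map_smul' := f'.toLinearMap.map_smul_complex_of_map_single_I hI }, f'.cont⟩,
    hasFDerivAt_of_restrictScalars ℝ hf rfl⟩

lemma ContinuousLinearMap.eq_zero_of_map_single_one_of_map_single_I {E : Type*}
    [NormedAddCommGroup E] [NormedSpace ℝ E] {T : (ι → ℂ) →L[ℝ] E}
    (h1 : ∀ k, T (Pi.single k 1) = 0) (hI : ∀ k, T (Pi.single k I) = 0) : T = 0 := by
  refine ContinuousLinearMap.coe_injective (LinearMap.pi_ext fun k c => ?_)
  have hc : (Pi.single k c : ι → ℂ) =
      c.re • (Pi.single k 1 : ι → ℂ) + c.im • (Pi.single k I : ι → ℂ) := by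
    rw [← Pi.single_smul', ← Pi.single_smul', ← Pi.single_add]
    simp
  simp [hc, h1, hI]

end CoordinateSpace

lemma conj_add_smul_single_I {ι : Type*} [DecidableEq ι] {q : ι → ℂ} (hq : ∀ j, (q j).im = 0)
    (t : ℝ) (k : ι) :
    (fun j => conj ((q + t • (Pi.single k I : ι → ℂ)) j)) = q + t • -(Pi.single k I : ι → ℂ) := by
  funext j
  by_cases hj : j = k <;> simp [hj, conj_eq_iff_im.2 (hq _)]

section Pluriharmonic

variable {ι : Type*} [Fintype ι] [DecidableEq ι]

def IsPluriharmonicOn (h : (ι → ℂ) → ℝ) (V : Set (ι → ℂ)) : Prop :=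
  ∀ z ∈ V, ∀ j k : ι,
    (fderiv ℝ (fun y => fderiv ℝ h y (Pi.single k (1 : ℂ))) z (Pi.single j (1 : ℂ))
      + fderiv ℝ (fun y => fderiv ℝ h y (Pi.single k I)) z (Pi.single j I) = 0)
    ∧ (fderiv ℝ (fun y => fderiv ℝ h y (Pi.single k I)) z (Pi.single j (1 : ℂ))
      - fderiv ℝ (fun y => fderiv ℝ h y (Pi.single k (1 : ℂ))) z (Pi.single j I) = 0)

/-- `2 ∂h/∂z_k`, in real coordinates. -/
noncomputable def dz (h : (ι → ℂ) → ℝ) (k : ι) (z : ι → ℂ) : ℂ :=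
  fderiv ℝ h z (Pi.single k 1) - I * fderiv ℝ h z (Pi.single k I)

variable {h : (ι → ℂ) → ℝ} {V : Set (ι → ℂ)}

theorem IsPluriharmonicOn.differentiableOn_dz (hh : IsPluriharmonicOn h V) (hV : IsOpen V)
    (hC2 : ContDiffOn ℝ 2 h V) (k : ι) : DifferentiableOn ℂ (dz h k) V := by
  intro z hz
  have hD : DifferentiableAt ℝ (fderiv ℝ h) z :=
    ((hC2.fderiv_of_isOpen hV (by norm_num)).differentiableOn one_ne_zero).differentiableAt
      (hV.mem_nhds hz)
  have hA := (hD.clm_apply (differentiableAt_const (Pi.single k (1 : ℂ)))).hasFDerivAt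
  have hB := (hD.clm_apply (differentiableAt_const (Pi.single k I))).hasFDerivAt
  refine (((ofRealCLM.hasFDerivAt.comp z hA).sub
    ((ofRealCLM.hasFDerivAt.comp z hB).const_mul I)).differentiableAt_complex_of_map_single_I
      fun j => ?_).differentiableWithinAt
  obtain ⟨hxx, hxy⟩ := hh z hz j k
  simp only [sub_apply, smul_apply, ContinuousLinearMap.comp_apply, ofRealCLM_apply, smul_eq_mul]
  rw [eq_neg_of_add_eq_zero_right hxx, (sub_eq_zero.1 hxy).symm]
  push_cast
  linear_combination
    (fderiv ℝ (fun y => fderiv ℝ h y (Pi.single k I)) z (Pi.single j 1) : ℂ) * I_sq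

theorem dz_eq_zero_of_real (hV : IsOpen V) (hd : DifferentiableOn ℝ h V)
    (hzero : ∀ z ∈ V, (∀ j, (z j).im = 0) → h z = 0)
    (hsym : ∀ z ∈ V, (fun j => conj (z j)) ∈ V → h (fun j => conj (z j)) = h z)
    {q : ι → ℂ} (hq : q ∈ V) (hqre : ∀ j, (q j).im = 0) (k : ι) : dz h k q = 0 := by
  have hdq := hd.differentiableAt (hV.mem_nhds hq)
  have hline (v : ι → ℂ) : ∀ᶠ t : ℝ in 𝓝 0, q + t • v ∈ V :=
    (tendsto_add_smul_nhds_zero q v).eventually (hV.mem_nhds hq)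
  have hre : fderiv ℝ h q (Pi.single k 1) = 0 := by
    rw [← hdq.lineDeriv_eq_fderiv]
    refine lineDeriv_eq_zero_of_eventually_eq_zero
      ((hline _).mono fun t ht => hzero _ ht fun j => ?_)
    by_cases hj : j = k <;> simp [hj, hqre]
  have him : fderiv ℝ h q (Pi.single k I) = 0 := by
    rw [← hdq.lineDeriv_eq_fderiv]
    refine lineDeriv_eq_zero_of_eventually_even ?_
    filter_upwards [hline (Pi.single k I), hline (-Pi.single k I)] with t ht ht'
    rw [← conj_add_smul_single_I hqre t k] at ht' ⊢
    exact hsym _ ht ht'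
  simp [dz, hre, him]

lemma fderiv_eq_zero_of_forall_dz_eq_zero {z : ι → ℂ} (hz : ∀ k, dz h k z = 0) :
    fderiv ℝ h z = 0 := by
  have hk (k : ι) := Complex.ext_iff.1 (hz k)
  simp only [dz, sub_re, ofReal_re, mul_re, I_re, I_im, ofReal_im, sub_im, mul_im, zero_re,
    zero_im] at hk
  exact ContinuousLinearMap.eq_zero_of_map_single_one_of_map_single_I
    (fun k => by linarith [hk k]) (fun k => by linarith [hk k])

end Pluriharmonic

theorem pluriharmonic_reflection_vanishes_general
    (m : ℕ) (V : Set (Fin m → ℂ))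
    (hVopen : IsOpen V) (hVconv : Convex ℝ V)
    (hVreal : ∃ z ∈ V, ∀ j, (z j).im = 0)
    (h : (Fin m → ℂ) → ℝ)
    (hC2 : ContDiffOn ℝ 2 h V)
    (hpluri : ∀ z ∈ V, ∀ j k : Fin m,
      (fderiv ℝ (fun y => fderiv ℝ h y (Pi.single k (1 : ℂ))) z (Pi.single j (1 : ℂ))
        + fderiv ℝ (fun y => fderiv ℝ h y (Pi.single k (Complex.I))) z
            (Pi.single j (Complex.I)) = 0)
      ∧ (fderiv ℝ (fun y => fderiv ℝ h y (Pi.single k (Complex.I))) z (Pi.single j (1 : ℂ))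
        - fderiv ℝ (fun y => fderiv ℝ h y (Pi.single k (1 : ℂ))) z
            (Pi.single j (Complex.I)) = 0))
    (hzero : ∀ z ∈ V, (∀ j, (z j).im = 0) → h z = 0)
    (hsym : ∀ z ∈ V, (fun j => (starRingEnd ℂ) (z j)) ∈ V →
      h (fun j => (starRingEnd ℂ) (z j)) = h z) :
    ∀ z ∈ V, h z = 0 := by
  obtain ⟨p, hpV, hpre⟩ := hVreal
  have hd : DifferentiableOn ℝ h V := hC2.differentiableOn (by norm_num)
  have hdz (k : Fin m) : EqOn (dz h k) 0 V :=
    ((show IsPluriharmonicOn h V from hpluri).differentiableOn_dz hVopen hC2 k)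
      |>.eqOn_zero_of_forall_real hVopen hVconv hpV hpre
        fun q hq hqre => dz_eq_zero_of_real hVopen hd hzero hsym hq hqre k
  have hfd : EqOn (fderiv ℝ h) 0 V := fun z hz =>
    fderiv_eq_zero_of_forall_dz_eq_zero fun k => hdz k hz
  intro z hz
  rw [hVopen.is_const_of_fderiv_eq_zero hVconv.isPreconnected hd hfd hz hpV]
  exact hzero p hpV hpre

/-- **Schwarz reflection for pluriharmonic functions.**
Let `V` be an open convex subset of `ℂ^m` meeting `ℝ^m`, and let `h : V → ℝ` be a
`C²` pluriharmonic function (all mixed Wirtinger derivatives `∂²h/∂z_j∂z̄_k` vanish,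
expressed here in real coordinates as
`∂²h/∂x_j∂x_k + ∂²h/∂y_j∂y_k = 0` and `∂²h/∂x_j∂y_k − ∂²h/∂y_j∂x_k = 0`)
which vanishes on `V ∩ ℝ^m` and satisfies `h(z̄) = h(z)` whenever `z, z̄ ∈ V`.
Then `h` is identically zero on `V`. -/
theorem pluriharmonic_reflection_vanishes
    (m : ℕ) (hm : 0 < m) (V : Set (Fin m → ℂ))
    (hVopen : IsOpen V) (hVconv : Convex ℝ V)
    (hVreal : ∃ z ∈ V, ∀ j, (z j).im = 0)
    (h : (Fin m → ℂ) → ℝ)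
    (hC2 : ContDiffOn ℝ 2 h V)
    (hpluri : ∀ z ∈ V, ∀ j k : Fin m,
      (fderiv ℝ (fun y => fderiv ℝ h y (Pi.single k (1 : ℂ))) z (Pi.single j (1 : ℂ))
        + fderiv ℝ (fun y => fderiv ℝ h y (Pi.single k (Complex.I))) z
            (Pi.single j (Complex.I)) = 0)
      ∧ (fderiv ℝ (fun y => fderiv ℝ h y (Pi.single k (Complex.I))) z (Pi.single j (1 : ℂ))
        - fderiv ℝ (fun y => fderiv ℝ h y (Pi.single k (1 : ℂ))) z
            (Pi.single j (Complex.I)) = 0))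
    (hzero : ∀ z ∈ V, (∀ j, (z j).im = 0) → h z = 0)
    (hsym : ∀ z ∈ V, (fun j => (starRingEnd ℂ) (z j)) ∈ V →
      h (fun j => (starRingEnd ℂ) (z j)) = h z) :
    ∀ z ∈ V, h z = 0 :=
  pluriharmonic_reflection_vanishes_general m V hVopen hVconv hVreal h hC2 hpluri hzero hsym
end

section
/- Let W be a nonempty open connected subset of ℂ with W ∩ ℝ nonempty, and let f : W → ℝ be a harmonic function such that: (i) f(x) = 0 for all x ∈ W ∩ ℝ; and (ii) f(z̄) = f(z) for every z ∈ W with z̄ ∈ W. Then f is identically zero on W. -/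
/-!
Harmonicity of `f` and the symmetry of `d²f` form the Cauchy–Riemann system for
`g = ∂ₓf - i ∂_y f`, so `g` is holomorphic on `W`. At real points `∂ₓf = 0` because `f` vanishes
on the real axis, and `∂_y f = 0` because `f` is even in `y`. Since `W ∩ ℝ` accumulates in `W`,
the identity theorem gives `g ≡ 0`, so `df ≡ 0` on the connected set `W` and `f` is the
constant `0`.
-/

open Complex ComplexConjugate InnerProductSpace Laplacian Filter Topology Set

section

variable {F : Type*} [NormedAddCommGroup F] [NormedSpace ℝ F]

theorem laplacian_apply_eq_fderiv_fderiv_one_add_I {f : ℂ → F} {z : ℂ}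
    (hf : DifferentiableAt ℝ (fderiv ℝ f) z) :
    Δ f z = fderiv ℝ (fun y ↦ fderiv ℝ f y 1) z 1 + fderiv ℝ (fun y ↦ fderiv ℝ f y I) z I := by
  simp [laplacian_eq_iteratedFDeriv_complexPlane, iteratedFDeriv_two_apply,
    fderiv_clm_apply hf (differentiableAt_const _)]

theorem harmonicOnNhd_of_fderiv_fderiv_one_add_I {f : ℂ → F} {W : Set ℂ} (hW : IsOpen W)
    (hf : ContDiffOn ℝ 2 f W)
    (hΔ : ∀ z ∈ W,
      fderiv ℝ (fun y ↦ fderiv ℝ f y 1) z 1 + fderiv ℝ (fun y ↦ fderiv ℝ f y I) z I = 0) :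
    HarmonicOnNhd f W := by
  have hdiff : ∀ z ∈ W, DifferentiableAt ℝ (fderiv ℝ f) z := fun z hz ↦
    ((hf.contDiffAt (hW.mem_nhds hz)).fderiv_right (m := 1) le_rfl).differentiableAt one_ne_zero
  refine fun z hz ↦ ⟨hf.contDiffAt (hW.mem_nhds hz), ?_⟩
  filter_upwards [hW.mem_nhds hz] with y hy
  rw [laplacian_apply_eq_fderiv_fderiv_one_add_I (hdiff y hy), hΔ y hy, Pi.zero_apply]

theorem fderiv_apply_one_eq_zero_of_eventually_ofReal {f : ℂ → F} {r : ℝ}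
    (hf : DifferentiableAt ℝ f r) (h : ∀ᶠ t : ℝ in 𝓝 r, f t = 0) : fderiv ℝ f r 1 = 0 := by
  have hcomp : HasFDerivAt (f ∘ ofReal) ((fderiv ℝ f r).comp ofRealCLM) r :=
    hf.hasFDerivAt.comp r ofRealCLM.hasFDerivAt
  have hzero : HasFDerivAt (f ∘ ofReal) (0 : ℝ →L[ℝ] F) r :=
    (hasFDerivAt_const 0 r).congr_of_eventuallyEq h
  simpa using congr($(hcomp.unique hzero) 1)

theorem fderiv_apply_I_eq_zero_of_eventually_conj {f : ℂ → F} {r : ℝ}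
    (hf : DifferentiableAt ℝ f r) (h : ∀ᶠ z in 𝓝 (r : ℂ), f (conj z) = f z) :
    fderiv ℝ f r I = 0 := by
  have hcomp : HasFDerivAt (f ∘ conj) ((fderiv ℝ f r).comp conjCLE.toContinuousLinearMap) r := by
    refine HasFDerivAt.comp (r : ℂ) ?_ conjCLE.hasFDerivAt
    simpa using hf.hasFDerivAt
  have hsame := hcomp.unique (hf.hasFDerivAt.congr_of_eventuallyEq h)
  have hneg : -fderiv ℝ f r I = fderiv ℝ f r I := by
    simpa using congr($hsame I)
  rwa [neg_eq_iff_add_eq_zero, ← two_smul ℝ, smul_eq_zero_iff_right two_ne_zero] at hneg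

theorem Complex.continuousLinearMap_ext {L M : ℂ →L[ℝ] F} (h1 : L 1 = M 1) (hI : L I = M I) :
    L = M :=
  ContinuousLinearMap.coe_injective <| basisOneI.ext <| by simp [Fin.forall_fin_two, h1, hI]

theorem fderiv_ofReal_eq_zero_of_vanishing_of_conj_invariant {f : ℂ → F} {W : Set ℂ}
    (hW : IsOpen W) (hf : DifferentiableOn ℝ f W) (hzero : ∀ x ∈ W, x.im = 0 → f x = 0)
    (hsym : ∀ z ∈ W, conj z ∈ W → f (conj z) = f z) {r : ℝ} (hr : (r : ℂ) ∈ W) :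
    fderiv ℝ f r = 0 := by
  have hW_nhds : W ∈ 𝓝 (r : ℂ) := hW.mem_nhds hr
  have hdiff : DifferentiableAt ℝ f r := hf.differentiableAt hW_nhds
  have hreal : ∀ᶠ t : ℝ in 𝓝 r, f t = 0 :=
    (continuous_ofReal.tendsto r).eventually_mem hW_nhds |>.mono
      fun t ht ↦ hzero _ ht (ofReal_im t)
  have hconj : ∀ᶠ z in 𝓝 (r : ℂ), f (conj z) = f z := by
    have hconj_nhds : ∀ᶠ z in 𝓝 (r : ℂ), conj z ∈ W :=
      (continuous_conj.tendsto' _ _ (conj_ofReal r)).eventually_mem hW_nhds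
    filter_upwards [hW_nhds, hconj_nhds] with z hz hz'
    exact hsym z hz hz'
  exact Complex.continuousLinearMap_ext
    (fderiv_apply_one_eq_zero_of_eventually_ofReal hdiff hreal)
    (fderiv_apply_I_eq_zero_of_eventually_conj hdiff hconj)

end

theorem Complex.ofReal_sub_I_mul_ofReal_eq_zero_iff {a b : ℝ} :
    (a : ℂ) - I * b = 0 ↔ a = 0 ∧ b = 0 := by
  simp [Complex.ext_iff]

theorem Complex.frequently_nhdsNE_ofReal {p : ℂ → Prop} {r : ℝ} (h : ∀ᶠ t : ℝ in 𝓝 r, p t) :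
    ∃ᶠ z in 𝓝[≠] (r : ℂ), p z :=
  ((continuous_ofReal.continuousWithinAt (s := {r}ᶜ)).tendsto_nhdsWithin
    fun _ ht ↦ by simpa using ht).frequently
    (h.filter_mono nhdsWithin_le_nhds).frequently

/-- **Schwarz reflection for harmonic functions vanishing on the real axis.**
Let `W ⊆ ℂ` be a nonempty open connected set meeting the real axis, and let
`f : W → ℝ` be harmonic (`C²` with `∂²f/∂x² + ∂²f/∂y² = 0`, expressed via iterated
directional derivatives along `1` and `I`), vanishing on `W ∩ ℝ`, and satisfying
`f(z̄) = f(z)` whenever `z, z̄ ∈ W`.  Then `f` is identically zero on `W`. -/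
theorem harmonic_reflection_vanishes
    (W : Set ℂ) (hWopen : IsOpen W) (hWconn : IsConnected W)
    (hWreal : ∃ x ∈ W, x.im = 0)
    (f : ℂ → ℝ) (hC2 : ContDiffOn ℝ 2 f W)
    (hharm : ∀ z ∈ W,
      fderiv ℝ (fun y => fderiv ℝ f y (1 : ℂ)) z (1 : ℂ)
        + fderiv ℝ (fun y => fderiv ℝ f y Complex.I) z Complex.I = 0)
    (hzero : ∀ x ∈ W, x.im = 0 → f x = 0)
    (hsym : ∀ z ∈ W, (starRingEnd ℂ) z ∈ W → f ((starRingEnd ℂ) z) = f z) :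
    ∀ z ∈ W, f z = 0 := by
  have hdiff : DifferentiableOn ℝ f W := hC2.differentiableOn two_ne_zero
  have hfderiv_real : ∀ r : ℝ, (r : ℂ) ∈ W → fderiv ℝ f r = 0 := fun r hr ↦
    fderiv_ofReal_eq_zero_of_vanishing_of_conj_invariant hWopen hdiff hzero hsym hr
  obtain ⟨x₀, hrW, hr_im⟩ := hWreal
  obtain ⟨r, rfl⟩ : ∃ r : ℝ, (r : ℂ) = x₀ := ⟨x₀.re, by simpa [hr_im] using re_add_im x₀⟩
  have hpartial : EqOn (fun z ↦ fderiv ℝ f z 1 - I * fderiv ℝ f z I) 0 W :=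
    AnalyticOnNhd.eqOn_zero_of_preconnected_of_frequently_eq_zero
      (fun z hz ↦ HarmonicAt.analyticAt_complex_partial
        (harmonicOnNhd_of_fderiv_fderiv_one_add_I hWopen hC2 hharm z hz))
      hWconn.isPreconnected hrW <| Complex.frequently_nhdsNE_ofReal <|
        (continuous_ofReal.tendsto r).eventually_mem (hWopen.mem_nhds hrW) |>.mono
          fun t ht ↦ by simp [hfderiv_real t ht]
  have hfderiv : EqOn (fderiv ℝ f) 0 W := fun z hz ↦
    have ⟨h1, hI⟩ := Complex.ofReal_sub_I_mul_ofReal_eq_zero_iff.mp (hpartial hz)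
    Complex.continuousLinearMap_ext (by simpa using h1) (by simpa using hI)
  intro z hz
  rw [hWopen.is_const_of_fderiv_eq_zero hWconn.isPreconnected hdiff hfderiv hz hrW,
    hzero _ hrW hr_im]
end

section
/- Let m be a positive integer, V a nonempty open convex subset of ℂ^m, and h : V → ℝ a twice continuously differentiable pluriharmonic function (∂²h/∂z_j∂z̄_k = 0 on V for all j,k). Then there exists a holomorphic function F : V → ℂ with F(z) ≠ 0 for all z ∈ V, such that h(z) = log(|F(z)|²) for all z ∈ V. -/
/-!
Write `B` for the real Hessian of `h`. Together with the symmetry of `B`, the coordinate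
conditions say exactly that `B u (I • v) = B v (I • u)` for all `u, v`, i.e. that the real
1-form `η = -dh ∘ (I • ·)` is closed. On the star-shaped set `V` it then has a primitive `v`
(the radial integral `∫₀¹ η (z₀ + t • (z - z₀)) (z - z₀) dt`), and `P = h + I * v` has the
complex-linear real differential `dh - I * dh ∘ (I • ·)`, so `P` is holomorphic with `Re P = h`.
Finally `F = exp (P / 2)`.
-/

open Set Filter Topology Complex
open scoped Interval

theorem hasFDerivAt_intervalIntegral_of_continuousOn {H E : Type*}
    [NormedAddCommGroup H] [NormedSpace ℝ H] [NormedAddCommGroup E] [NormedSpace ℝ E]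
    {F : H → ℝ → E} {F' : H → ℝ → H →L[ℝ] E} {s : Set H} {x₀ : H} {a b : ℝ} (hab : a ≤ b)
    (hs : IsCompact s) (hx₀ : s ∈ 𝓝 x₀) (hF : ∀ x ∈ s, ContinuousOn (F x) (Icc a b))
    (hF' : ContinuousOn (Function.uncurry F') (s ×ˢ Icc a b))
    (hderiv : ∀ x ∈ s, ∀ t ∈ Icc a b, HasFDerivAt (F · t) (F' x t) x) :
    HasFDerivAt (fun x => ∫ t in a..b, F x t) (∫ t in a..b, F' x₀ t) x₀ := by
  obtain ⟨C, hC⟩ := (hs.prod isCompact_Icc).exists_bound_of_continuousOn hF'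
  have hIoc : Ι a b ⊆ Icc a b := by rw [uIoc_of_le hab]; exact Ioc_subset_Icc_self
  have hF'x₀ : ContinuousOn (F' x₀) (Icc a b) :=
    hF'.comp (Continuous.prodMk_right x₀).continuousOn fun t ht => ⟨mem_of_mem_nhds hx₀, ht⟩
  refine intervalIntegral.hasFDerivAt_integral_of_dominated_of_fderiv_le (bound := fun _ => C) hx₀
    ?_ ?_ ?_ ?_ intervalIntegrable_const ?_
  · filter_upwards [hx₀] with x hx
    exact ((hF x hx).mono hIoc).aestronglyMeasurable measurableSet_uIoc
  · exact ((hF x₀ (mem_of_mem_nhds hx₀)).intervalIntegrable_of_Icc hab)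
  · exact (hF'x₀.mono hIoc).aestronglyMeasurable measurableSet_uIoc
  · exact Eventually.of_forall fun t ht x hx => hC (x, t) ⟨hx, hIoc ht⟩
  · exact Eventually.of_forall fun t ht x hx => hderiv x hx t (hIoc ht)

theorem StarConvex.exists_forall_hasFDerivAt_of_fderiv_symm {E F : Type*}
    [NormedAddCommGroup E] [NormedSpace ℝ E] [FiniteDimensional ℝ E]
    [NormedAddCommGroup F] [NormedSpace ℝ F] [CompleteSpace F]
    {V : Set E} {z₀ : E} (hV : IsOpen V) (hstar : StarConvex ℝ z₀ V)
    {ω : E → E →L[ℝ] F} (hω : ContDiffOn ℝ 1 ω V)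
    (hsymm : ∀ z ∈ V, ∀ u v, fderiv ℝ ω z u v = fderiv ℝ ω z v u) :
    ∃ P : E → F, ∀ z ∈ V, HasFDerivAt P (ω z) z := by
  have hdω : ∀ z ∈ V, HasFDerivAt ω (fderiv ℝ ω z) z := fun z hz =>
    ((hω.differentiableOn one_ne_zero z hz).differentiableAt (hV.mem_nhds hz)).hasFDerivAt
  have hω' : ContinuousOn (fderiv ℝ ω) V := hω.continuousOn_fderiv_of_isOpen hV le_rfl
  set γ : ℝ → E → E := fun t x => z₀ + t • (x - z₀)
  have hγV : ∀ x ∈ V, ∀ t ∈ Icc (0 : ℝ) 1, γ t x ∈ V := fun x hx t ht =>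
    hstar.add_smul_sub_mem hx ht.1 ht.2
  have hγx : ∀ x, Continuous fun t => γ t x := fun x => by fun_prop
  have hγt : ∀ (t : ℝ) x, HasFDerivAt (γ t) (t • ContinuousLinearMap.id ℝ E) x := fun t x =>
    (((hasFDerivAt_id (𝕜 := ℝ) x).sub_const z₀).const_smul t).const_add z₀
  refine ⟨fun x => ∫ t in (0 : ℝ)..1, ω (γ t x) (x - z₀), fun z hz => ?_⟩
  obtain ⟨ε, hε, hεV⟩ := Metric.nhds_basis_closedBall.mem_iff.1 (hV.mem_nhds hz)
  set F' : E → ℝ → E →L[ℝ] F := fun x t => ω (γ t x) + t • (fderiv ℝ ω (γ t x)).flip (x - z₀)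
  have hF'cont : ContinuousOn (Function.uncurry F') (Metric.closedBall z ε ×ˢ Icc 0 1) := by
    have hγc : ContinuousOn (fun p : E × ℝ => γ p.2 p.1) (Metric.closedBall z ε ×ˢ Icc 0 1) :=
      by fun_prop
    have hmaps : MapsTo (fun p : E × ℝ => γ p.2 p.1) (Metric.closedBall z ε ×ˢ Icc 0 1) V :=
      fun p hp => hγV p.1 (hεV hp.1) p.2 hp.2
    refine (hω.continuousOn.comp hγc hmaps).add (continuousOn_snd.smul ?_)
    exact ((ContinuousLinearMap.flipₗᵢ ℝ E E F).continuous.comp_continuousOn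
      (hω'.comp hγc hmaps)).clm_apply (by fun_prop)
  have hF'z : ContinuousOn (F' z) (Icc 0 1) :=
    hF'cont.comp (Continuous.prodMk_right z).continuousOn fun t ht =>
      ⟨Metric.mem_closedBall_self hε.le, ht⟩
  have hF' : HasFDerivAt (fun x => ∫ t in (0 : ℝ)..1, ω (γ t x) (x - z₀))
      (∫ t in (0 : ℝ)..1, F' z t) z := by
    refine hasFDerivAt_intervalIntegral_of_continuousOn zero_le_one (isCompact_closedBall z ε)
      (Metric.closedBall_mem_nhds z hε) (fun x hx => ?_) hF'cont (fun x hx t ht => ?_)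
    · exact (hω.continuousOn.comp (hγx x).continuousOn (hγV x (hεV hx))).clm_apply
        continuousOn_const
    · have hchain := ((hdω _ (hγV x (hεV hx) t ht)).comp x (hγt t x)).clm_apply
        ((hasFDerivAt_id x).sub_const z₀)
      refine hchain.congr_fderiv ?_
      ext w
      simp [F']
  refine hF'.congr_fderiv ?_
  ext w
  rw [ContinuousLinearMap.intervalIntegral_apply (hF'z.intervalIntegrable_of_Icc zero_le_one) w]
  -- By the symmetry of `dω`, the integrand is the derivative of `t ↦ t • ω (γ t z) w`.
  have hφ : ∀ t ∈ [[(0 : ℝ), 1]], HasDerivAt (fun s => s • ω (γ s z) w) (F' z t w) t := by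
    intro t ht
    rw [uIcc_of_le zero_le_one] at ht
    have hγ' : HasDerivAt (fun s => γ s z) (z - z₀) t :=
      (((hasDerivAt_id t).smul_const (z - z₀)).const_add z₀).congr_deriv (one_smul _ _)
    have hωγ : HasDerivAt (fun s => ω (γ s z)) (fderiv ℝ ω (γ t z) (z - z₀)) t :=
      (hdω _ (hγV z hz t ht)).comp_hasDerivAt t hγ'
    have hωγw := hωγ.clm_apply (hasDerivAt_const t w)
    refine ((hasDerivAt_id t).smul hωγw).congr_deriv ?_
    simp [F', hsymm _ (hγV z hz t ht), add_comm]
  rw [intervalIntegral.integral_eq_sub_of_hasDerivAt hφ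
    ((hF'z.clm_apply continuousOn_const).intervalIntegrable_of_Icc zero_le_one)]
  simp [γ]

theorem HasFDerivAt.differentiableAt_complex_of_map_I_smul {E F : Type*}
    [NormedAddCommGroup E] [NormedSpace ℂ E] [NormedAddCommGroup F] [NormedSpace ℂ F]
    {f : E → F} {L : E →L[ℝ] F} {z : E} (hf : HasFDerivAt f L z)
    (hL : ∀ w, L (I • w) = I • L w) : DifferentiableAt ℂ f z := by
  let L' : E →L[ℂ] F :=
    { toFun := L
      map_add' := L.map_add
      map_smul' := fun c w => by
        calc L (c • w) = L (c.re • w + c.im • I • w) := by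
              rw [← coe_smul, ← coe_smul, smul_smul, ← add_smul, re_add_im]
          _ = c.re • L w + c.im • I • L w := by rw [map_add, map_smul, map_smul, hL]
          _ = c • L w := by rw [← coe_smul, ← coe_smul, smul_smul, ← add_smul, re_add_im]
      cont := L.continuous }
  exact (hasFDerivAt_of_restrictScalars ℝ (f' := L') hf rfl).differentiableAt

theorem fderiv_apply_eq_fderiv_fderiv {E F : Type*} [NormedAddCommGroup E] [NormedSpace ℝ E]
    [NormedAddCommGroup F] [NormedSpace ℝ F] {f : E → F} {z : E}
    (hf : DifferentiableAt ℝ (fderiv ℝ f) z) (u v : E) :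
    fderiv ℝ (fun y => fderiv ℝ f y v) z u = fderiv ℝ (fderiv ℝ f) z u v := by
  simp [fderiv_clm_apply hf (differentiableAt_const v)]

theorem apply_I_smul_comm_of_single {ι : Type*} [Fintype ι] [DecidableEq ι]
    (B : (ι → ℂ) →L[ℝ] (ι → ℂ) →L[ℝ] ℝ) (hB : ∀ u v, B u v = B v u)
    (h₁ : ∀ j k, B (Pi.single j 1) (Pi.single k 1) + B (Pi.single j I) (Pi.single k I) = 0)
    (h₂ : ∀ j k, B (Pi.single j 1) (Pi.single k I) - B (Pi.single j I) (Pi.single k 1) = 0)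
    (u v : ι → ℂ) : B u (I • v) = B v (I • u) := by
  let S : (ι → ℂ) →ₗ[ℝ] (ι → ℂ) →ₗ[ℝ] ℝ := LinearMap.mk₂ ℝ (fun u v => B u (I • v) - B v (I • u))
    (fun _ _ _ => by simp only [map_add, add_apply, smul_add]; ring)
    (fun _ _ _ => by simp only [map_smul, smul_apply, smul_eq_mul, smul_comm I]; ring)
    (fun _ _ _ => by simp only [map_add, add_apply, smul_add]; ring)
    (fun _ _ _ => by simp only [map_smul, smul_apply, smul_eq_mul, smul_comm I]; ring)
  let b := Pi.basis fun _ : ι => Complex.basisOneI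
  have hS : S = 0 := by
    refine LinearMap.ext_basis b b fun ⟨j, i⟩ ⟨k, l⟩ => ?_
    fin_cases i <;> fin_cases l <;>
      simp only [S, b, Fin.zero_eta, Fin.mk_one, Fin.isValue, Pi.basis_apply, coe_basisOneI,
        Nat.succ_eq_add_one, Nat.reduceAdd, Matrix.cons_val_zero, Matrix.cons_val_one,
        Matrix.cons_val_fin_one, LinearMap.mk₂_apply, ← Pi.single_smul, smul_eq_mul, mul_one,
        I_mul_I, Pi.single_neg, map_neg, LinearMap.zero_apply] <;>
      linarith [h₁ j k, h₂ j k, hB (Pi.single j I) (Pi.single k 1),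
        hB (Pi.single k 1) (Pi.single j 1), hB (Pi.single k I) (Pi.single j 1),
        hB (Pi.single k I) (Pi.single j I)]
  simpa [S, sub_eq_zero] using LinearMap.congr_fun₂ hS u v

theorem StarConvex.exists_differentiableOn_re_eq {E : Type*}
    [NormedAddCommGroup E] [NormedSpace ℂ E] [FiniteDimensional ℂ E]
    {V : Set E} {z₀ : E} (hV : IsOpen V) (hstar : StarConvex ℝ z₀ V)
    {h : E → ℝ} (hh : ContDiffOn ℝ 2 h V)
    (hpluri : ∀ z ∈ V, ∀ u v,
      fderiv ℝ (fderiv ℝ h) z u (I • v) = fderiv ℝ (fderiv ℝ h) z v (I • u)) :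
    ∃ P : E → ℂ, DifferentiableOn ℂ P V ∧ ∀ z ∈ V, (P z).re = h z := by
  have : FiniteDimensional ℝ E := .complexToReal E
  let J : E →L[ℝ] E := ContinuousLinearMap.lsmul ℝ ℂ I
  let Φ : (E →L[ℝ] ℝ) →L[ℝ] (E →L[ℝ] ℝ) := -(ContinuousLinearMap.compL ℝ E E ℝ).flip J
  have hdhC1 : ContDiffOn ℝ 1 (fderiv ℝ h) V := hh.fderiv_of_isOpen hV (by norm_num)
  have hd2h : ∀ z ∈ V, HasFDerivAt (fderiv ℝ h) (fderiv ℝ (fderiv ℝ h) z) z := fun z hz =>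
    ((hdhC1.differentiableOn one_ne_zero z hz).differentiableAt (hV.mem_nhds hz)).hasFDerivAt
  obtain ⟨v, hv⟩ := hstar.exists_forall_hasFDerivAt_of_fderiv_symm hV
    (Φ.contDiff.comp_contDiffOn hdhC1) fun z hz u w => by
      rw [(Φ.hasFDerivAt.comp z (hd2h z hz)).fderiv]
      simp [Φ, J, hpluri z hz]
  refine ⟨fun z => h z + I * v z, fun z hz => ?_, fun z _ => by simp⟩
  have hdh : HasFDerivAt h (fderiv ℝ h z) z :=
    ((hh.differentiableOn two_ne_zero z hz).differentiableAt (hV.mem_nhds hz)).hasFDerivAt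
  have hP := (ofRealCLM.hasFDerivAt.comp z hdh).add
    ((ofRealCLM.hasFDerivAt.comp z (hv z hz)).const_smul I)
  refine (hP.differentiableAt_complex_of_map_I_smul fun w => ?_).differentiableWithinAt
  simp only [Φ, J, add_apply, smul_apply, ContinuousLinearMap.comp_apply, Function.comp_apply,
    ofRealCLM_apply, FunLike.coe_neg, Pi.neg_apply, ContinuousLinearMap.flip_apply,
    ContinuousLinearMap.compL_apply, ContinuousLinearMap.lsmul_apply, smul_smul, I_mul_I, neg_smul,
    one_smul, map_neg, smul_eq_mul]
  linear_combination (↑(fderiv ℝ h z (I • w)) : ℂ) * I_mul_I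

theorem pluriharmonic_eq_log_sq_abs_holomorphic_general
    (m : ℕ) (V : Set (Fin m → ℂ))
    (hVopen : IsOpen V) (hVconv : Convex ℝ V) (hVne : V.Nonempty)
    (h : (Fin m → ℂ) → ℝ)
    (hC2 : ContDiffOn ℝ 2 h V)
    (hpluri : ∀ z ∈ V, ∀ j k : Fin m,
      (fderiv ℝ (fun y => fderiv ℝ h y (Pi.single k (1 : ℂ))) z (Pi.single j (1 : ℂ))
        + fderiv ℝ (fun y => fderiv ℝ h y (Pi.single k (Complex.I))) z
            (Pi.single j (Complex.I)) = 0)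
      ∧ (fderiv ℝ (fun y => fderiv ℝ h y (Pi.single k (Complex.I))) z (Pi.single j (1 : ℂ))
        - fderiv ℝ (fun y => fderiv ℝ h y (Pi.single k (1 : ℂ))) z
            (Pi.single j (Complex.I)) = 0)) :
    ∃ F : (Fin m → ℂ) → ℂ,
      DifferentiableOn ℂ F V ∧
      (∀ z ∈ V, F z ≠ 0) ∧
      (∀ z ∈ V, h z = Real.log (‖F z‖ ^ 2)) := by
  obtain ⟨z₀, hz₀⟩ := hVne
  have hpluriJ : ∀ z ∈ V, ∀ u v,
      fderiv ℝ (fderiv ℝ h) z u (I • v) = fderiv ℝ (fderiv ℝ h) z v (I • u) := by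
    intro z hz
    have hd : DifferentiableAt ℝ (fderiv ℝ h) z :=
      ((hC2.fderiv_of_isOpen hVopen (by norm_num)).differentiableOn one_ne_zero z hz
        ).differentiableAt (hVopen.mem_nhds hz)
    refine apply_I_smul_comm_of_single _
      ((hC2.contDiffAt (hVopen.mem_nhds hz)).isSymmSndFDerivAt (by simp)) (fun j k => ?_)
      (fun j k => ?_)
    · simpa only [fderiv_apply_eq_fderiv_fderiv hd] using (hpluri z hz j k).1
    · simpa only [fderiv_apply_eq_fderiv_fderiv hd] using (hpluri z hz j k).2
  obtain ⟨P, hP, hPre⟩ := (hVconv.starConvex hz₀).exists_differentiableOn_re_eq hVopen hC2 hpluriJ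
  refine ⟨fun z => exp (P z / 2), by fun_prop, fun z _ => exp_ne_zero _, fun z hz => ?_⟩
  rw [norm_exp, sq, ← Real.exp_add, Real.log_exp, div_ofNat_re, hPre z hz]
  ring

/-- **Holomorphic factorization of pluriharmonic functions.**
Let `V ⊆ ℂ^m` be a nonempty open convex set and `h : V → ℝ` a `C²` pluriharmonic
function (all mixed Wirtinger derivatives `∂²h/∂z_j∂z̄_k` vanish, expressed in real
coordinates).  Then there is a nowhere-vanishing holomorphic function `F : V → ℂ`
with `h = log |F|²` on `V`. -/
theorem pluriharmonic_eq_log_sq_abs_holomorphic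
    (m : ℕ) (hm : 0 < m) (V : Set (Fin m → ℂ))
    (hVopen : IsOpen V) (hVconv : Convex ℝ V) (hVne : V.Nonempty)
    (h : (Fin m → ℂ) → ℝ)
    (hC2 : ContDiffOn ℝ 2 h V)
    (hpluri : ∀ z ∈ V, ∀ j k : Fin m,
      (fderiv ℝ (fun y => fderiv ℝ h y (Pi.single k (1 : ℂ))) z (Pi.single j (1 : ℂ))
        + fderiv ℝ (fun y => fderiv ℝ h y (Pi.single k (Complex.I))) z
            (Pi.single j (Complex.I)) = 0)
      ∧ (fderiv ℝ (fun y => fderiv ℝ h y (Pi.single k (Complex.I))) z (Pi.single j (1 : ℂ))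
        - fderiv ℝ (fun y => fderiv ℝ h y (Pi.single k (1 : ℂ))) z
            (Pi.single j (Complex.I)) = 0)) :
    ∃ F : (Fin m → ℂ) → ℂ,
      DifferentiableOn ℂ F V ∧
      (∀ z ∈ V, F z ≠ 0) ∧
      (∀ z ∈ V, h z = Real.log (‖F z‖ ^ 2)) :=
  pluriharmonic_eq_log_sq_abs_holomorphic_general m V hVopen hVconv hVne h hC2 hpluri
end
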